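/- arXiv:1803.11148 — 4 statements merged into one kernel-verified Lean document; each statement's English description precedes it below -/
import Mathlib

section
/- Let c : ℝ → G be a continuous one-parameter subgroup (c(0) = e and c(t+t') = c(t)c(t') for all t, t' ∈ ℝ). Let φ : G → ℂ be continuous and assume that the function F(t, h) = φ(c(t)⁻¹ h) admits a partial derivative ∂F/∂t at every point of ℝ × G which is jointly continuous on ℝ × G; set ψ(h) = (∂F/∂t)(0, h). Then for every s ∈ H the map t ↦ U(c(t))(π(φ)s) is differentiable at t = 0 with derivative π(ψ)s; in particular every vector of the form π(φ)s is differentiable along the one-parameter subgroup c. -/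
open MeasureTheory
open scoped InnerProductSpace

/-! Left invariance of `μ` turns `U (c t) (π(φ) s)` into `∫ φ ((c t)⁻¹ * g) • U g s dμ`, so only
the integrand depends on `t`. Its `t`-derivative is continuous on the compact set
`[-1, 1] × G`, hence bounded there, and dominated convergence lets us differentiate under
the integral sign. -/

theorem hasDerivAt_integral_of_continuous_deriv_of_compactSpace
    {X E : Type*} [TopologicalSpace X] [CompactSpace X] [MeasurableSpace X]
    [OpensMeasurableSpace X] {μ : Measure X} [IsFiniteMeasureOnCompacts μ]
    [NormedAddCommGroup E] [NormedSpace ℝ E]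
    {F : ℝ → X → E} {F' : ℝ × X → E} (hF : ∀ t, Continuous (F t)) (hF' : Continuous F')
    (hderiv : ∀ t x, HasDerivAt (F · x) (F' (t, x)) t) (t₀ : ℝ) :
    HasDerivAt (fun t => ∫ x, F t x ∂μ) (∫ x, F' (t₀, x) ∂μ) t₀ := by
  obtain ⟨C, hC⟩ := ((isCompact_closedBall t₀ 1).prod isCompact_univ).exists_bound_of_continuousOn
    hF'.continuousOn
  have integrable {f : X → E} (hf : Continuous f) : Integrable f μ :=
    hf.integrable_of_hasCompactSupport (.of_compactSpace f)
  refine (hasDerivAt_integral_of_dominated_loc_of_deriv_le (bound := fun _ => C)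
    (Metric.ball_mem_nhds t₀ one_pos)
    (.of_forall fun t => (integrable (hF t)).aestronglyMeasurable) (integrable (hF t₀))
    (integrable (hF'.comp (Continuous.prodMk_right t₀))).aestronglyMeasurable
    (.of_forall fun x t ht => hC (t, x) ⟨Metric.ball_subset_closedBall ht, Set.mem_univ x⟩)
    (integrable_const C) (.of_forall fun x t _ => hderiv t x)).2

theorem apply_integral_smul_apply_eq_integral_inv_mul
    {G H : Type*} [Group G] [MeasurableSpace G] [MeasurableMul G]
    (μ : Measure G) [μ.IsMulLeftInvariant] [NormedAddCommGroup H] [NormedSpace ℂ H]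
    (U : G →* (H →L[ℂ] H)) (φ : G → ℂ) (s : H) (a : G) :
    U a (∫ g, φ g • U g s ∂μ) = ∫ g, φ (a⁻¹ * g) • U g s ∂μ := by
  -- `U a` is invertible, so it commutes with the Bochner integral without integrability.
  let L : H ≃L[ℂ] H := ContinuousLinearEquiv.unitsEquiv ℂ H (U.toHomUnits a)
  calc U a (∫ g, φ g • U g s ∂μ) = L (∫ g, φ g • U g s ∂μ) := rfl
    _ = ∫ g, φ g • U (a * g) s ∂μ := by
      rw [← L.integral_comp_comm]
      simp [L, map_mul]
    _ = ∫ g, φ (a⁻¹ * g) • U g s ∂μ := by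
      simpa using integral_mul_left_eq_self (fun g => φ (a⁻¹ * g) • U g s) a

theorem averaged_vector_differentiable_along_one_parameter_subgroup_general
    {G : Type*} [Group G] [TopologicalSpace G] [IsTopologicalGroup G]
    [CompactSpace G] [MeasurableSpace G] [BorelSpace G]
    (μ : Measure G) [μ.IsHaarMeasure]
    {H : Type*} [NormedAddCommGroup H] [InnerProductSpace ℂ H]
    (U : G →* (H →L[ℂ] H))
    (hUcont : ∀ s : H, Continuous fun g => (U g) s)
    (c : ℝ → G)
    (φ : G → ℂ) (hφ : Continuous φ)
    (F' : ℝ × G → ℂ) (hF'cont : Continuous F')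
    (hderiv : ∀ (t : ℝ) (h : G), HasDerivAt (fun τ : ℝ => φ ((c τ)⁻¹ * h)) (F' (t, h)) t)
    (s : H) :
    HasDerivAt (fun t : ℝ => (U (c t)) (∫ g, φ g • (U g) s ∂μ))
      (∫ g, F' (0, g) • (U g) s ∂μ) 0 := by
  have h := hasDerivAt_integral_of_continuous_deriv_of_compactSpace (μ := μ)
    (F := fun t g => φ ((c t)⁻¹ * g) • U g s) (F' := fun p => F' p • U p.2 s)
    (fun t => (hφ.comp (continuous_const_mul _)).smul (hUcont s))
    (hF'cont.smul ((hUcont s).comp continuous_snd)) (fun t g => (hderiv t g).smul_const _) 0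
  simpa only [apply_integral_smul_apply_eq_integral_inv_mul] using h

/-- If `c : ℝ → G` is a continuous one-parameter subgroup, `φ : G → ℂ` is
continuous, and the function `F(t, h) = φ(c(t)⁻¹ h)` admits a partial derivative in `t` at
every point which is jointly continuous on `ℝ × G`, with `ψ(h) = (∂F/∂t)(0, h)`, then for
every `s ∈ H` the map `t ↦ U(c(t))(π(φ)s)` is differentiable at `t = 0` with derivative
`π(ψ)s`. -/
theorem averaged_vector_differentiable_along_one_parameter_subgroup
    {G : Type*} [Group G] [TopologicalSpace G] [IsTopologicalGroup G]
    [CompactSpace G] [T2Space G] [MeasurableSpace G] [BorelSpace G]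
    (μ : Measure G) [μ.IsHaarMeasure] [IsProbabilityMeasure μ]
    {H : Type*} [NormedAddCommGroup H] [InnerProductSpace ℂ H] [CompleteSpace H]
    (U : G →* (H →L[ℂ] H))
    (hUnitary : ∀ (g : G) (x y : H), ⟪(U g) x, (U g) y⟫_ℂ = ⟪x, y⟫_ℂ)
    (hUcont : ∀ s : H, Continuous fun g => (U g) s)
    (c : ℝ → G) (hc_cont : Continuous c) (hc_zero : c 0 = 1)
    (hc_add : ∀ t t' : ℝ, c (t + t') = c t * c t')
    (φ : G → ℂ) (hφ : Continuous φ)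
    (F' : ℝ × G → ℂ) (hF'cont : Continuous F')
    (hderiv : ∀ (t : ℝ) (h : G), HasDerivAt (fun τ : ℝ => φ ((c τ)⁻¹ * h)) (F' (t, h)) t)
    (s : H) :
    HasDerivAt (fun t : ℝ => (U (c t)) (∫ g, φ g • (U g) s ∂μ))
      (∫ g, F' (0, g) • (U g) s ∂μ) 0 :=
  averaged_vector_differentiable_along_one_parameter_subgroup_general μ U hUcont c φ hφ F' hF'cont
    hderiv s
end

section
/- Let (V, ρ) be a finite-dimensional continuous unitary representation of G (V a finite-dimensional complex inner product space, ρ : G → (V →L[ℂ] V) a group homomorphism into unitary operators with g ↦ ρ(g)v continuous for each v). Then for all v, w ∈ V and all s, t ∈ H: ∫_G ∫_G ⟨ρ(g)v, ρ(h)w⟩_V · ⟨U(g)s, U(h)t⟩_H dμ(g) dμ(h) = ⟨s, π(C_{v,w}) t⟩_H, where C_{v,w} : G → ℂ is the matrix coefficient C_{v,w}(k) = ⟨v, ρ(k)w⟩_V. -/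
/-!
Unitarity turns the integrand into a function of `g⁻¹ * h` only, namely
`k ↦ ⟪v, ρ k w⟫ * ⟪s, U k t⟫`. Averaging over both `g` and `h` then collapses, by Fubini and left
invariance of the Haar measure, to a single average of this function, which is
`⟪s, π(C_{v,w}) t⟫` once the inner product is pulled out of the Bochner integral.
-/

open MeasureTheory
open scoped InnerProductSpace

theorem inner_map_apply_map_apply_eq_inner_map_inv_mul_apply
    {G 𝕜 E : Type*} [Group G] [RCLike 𝕜] [SeminormedAddCommGroup E] [InnerProductSpace 𝕜 E]
    (U : G →* (E →L[𝕜] E)) (hU : ∀ (g : G) (x y : E), ⟪U g x, U g y⟫_𝕜 = ⟪x, y⟫_𝕜)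
    (g h : G) (x y : E) :
    ⟪U g x, U h y⟫_𝕜 = ⟪x, U (g⁻¹ * h) y⟫_𝕜 := by
  rw [← hU g x, ← mul_apply_eq_comp, ← map_mul, mul_inv_cancel_left]

theorem integral_integral_inv_mul_eq_integral
    {G E : Type*} [Group G] [TopologicalSpace G] [IsTopologicalGroup G] [CompactSpace G]
    [MeasurableSpace G] [BorelSpace G] [NormedAddCommGroup E] [NormedSpace ℝ E] [CompleteSpace E]
    (μ : Measure G) [μ.IsMulLeftInvariant] [IsProbabilityMeasure μ] {f : G → E}
    (hf : Continuous f) :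
    ∫ h, ∫ g, f (g⁻¹ * h) ∂μ ∂μ = ∫ k, f k ∂μ := by
  rw [integral_integral_swap_of_hasCompactSupport (by fun_prop) (.of_compactSpace _)]
  simp_rw [integral_mul_left_eq_self f, integral_const, probReal_univ, one_smul]

theorem double_average_inner_eq_matrix_coefficient_average_general
    {G : Type*} [Group G] [TopologicalSpace G] [IsTopologicalGroup G]
    [CompactSpace G] [MeasurableSpace G] [BorelSpace G]
    (μ : Measure G) [μ.IsHaarMeasure] [IsProbabilityMeasure μ]
    {H : Type*} [NormedAddCommGroup H] [InnerProductSpace ℂ H] [CompleteSpace H]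
    (U : G →* (H →L[ℂ] H))
    (hUnitary : ∀ (g : G) (x y : H), ⟪(U g) x, (U g) y⟫_ℂ = ⟪x, y⟫_ℂ)
    (hUcont : ∀ s : H, Continuous fun g => (U g) s)
    {V : Type*} [NormedAddCommGroup V] [InnerProductSpace ℂ V]
    (ρ : G →* (V →L[ℂ] V))
    (hρUnitary : ∀ (g : G) (x y : V), ⟪(ρ g) x, (ρ g) y⟫_ℂ = ⟪x, y⟫_ℂ)
    (hρcont : ∀ v : V, Continuous fun g => (ρ g) v)
    (v w : V) (s t : H) :
    (∫ h, ∫ g, ⟪(ρ g) v, (ρ h) w⟫_ℂ * ⟪(U g) s, (U h) t⟫_ℂ ∂μ ∂μ)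
      = ⟪s, ∫ k, ⟪v, (ρ k) w⟫_ℂ • (U k) t ∂μ⟫_ℂ := by
  have hcoeff : Continuous fun k => ⟪v, ρ k w⟫_ℂ := continuous_const.inner (hρcont w)
  have hUt : Continuous fun k => U k t := hUcont t
  calc (∫ h, ∫ g, ⟪ρ g v, ρ h w⟫_ℂ * ⟪U g s, U h t⟫_ℂ ∂μ ∂μ)
      = ∫ h, ∫ g, ⟪v, ρ (g⁻¹ * h) w⟫_ℂ * ⟪s, U (g⁻¹ * h) t⟫_ℂ ∂μ ∂μ := by
        simp_rw [inner_map_apply_map_apply_eq_inner_map_inv_mul_apply ρ hρUnitary,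
          inner_map_apply_map_apply_eq_inner_map_inv_mul_apply U hUnitary]
    _ = ∫ k, ⟪v, ρ k w⟫_ℂ * ⟪s, U k t⟫_ℂ ∂μ :=
        integral_integral_inv_mul_eq_integral μ (hcoeff.mul (continuous_const.inner hUt))
    _ = ∫ k, ⟪s, ⟪v, ρ k w⟫_ℂ • U k t⟫_ℂ ∂μ := by simp_rw [inner_smul_right]
    _ = ⟪s, ∫ k, ⟪v, ρ k w⟫_ℂ • U k t ∂μ⟫_ℂ :=
        integral_inner ((hcoeff.smul hUt).integrable_of_hasCompactSupport (.of_compactSpace _)) s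

/-- For a finite-dimensional continuous unitary representation `(V, ρ)` of `G`,
all `v w ∈ V` and all `s t ∈ H`:
`∫∫ ⟨ρ(g)v, ρ(h)w⟩_V ⟨U(g)s, U(h)t⟩_H dμ(g) dμ(h) = ⟨s, π(C_{v,w})t⟩_H`, where
`C_{v,w}(k) = ⟨v, ρ(k)w⟩_V` is a matrix coefficient. -/
theorem double_average_inner_eq_matrix_coefficient_average
    {G : Type*} [Group G] [TopologicalSpace G] [IsTopologicalGroup G]
    [CompactSpace G] [T2Space G] [MeasurableSpace G] [BorelSpace G]
    (μ : Measure G) [μ.IsHaarMeasure] [IsProbabilityMeasure μ]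
    {H : Type*} [NormedAddCommGroup H] [InnerProductSpace ℂ H] [CompleteSpace H]
    (U : G →* (H →L[ℂ] H))
    (hUnitary : ∀ (g : G) (x y : H), ⟪(U g) x, (U g) y⟫_ℂ = ⟪x, y⟫_ℂ)
    (hUcont : ∀ s : H, Continuous fun g => (U g) s)
    {V : Type*} [NormedAddCommGroup V] [InnerProductSpace ℂ V] [FiniteDimensional ℂ V]
    (ρ : G →* (V →L[ℂ] V))
    (hρUnitary : ∀ (g : G) (x y : V), ⟪(ρ g) x, (ρ g) y⟫_ℂ = ⟪x, y⟫_ℂ)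
    (hρcont : ∀ v : V, Continuous fun g => (ρ g) v)
    (v w : V) (s t : H) :
    (∫ h, ∫ g, ⟪(ρ g) v, (ρ h) w⟫_ℂ * ⟪(U g) s, (U h) t⟫_ℂ ∂μ ∂μ)
      = ⟪s, ∫ k, ⟪v, (ρ k) w⟫_ℂ • (U k) t ∂μ⟫_ℂ :=
  double_average_inner_eq_matrix_coefficient_average_general μ U hUnitary hUcont ρ hρUnitary hρcont
    v w s t
end

section
/- Let (V, ρ) be a finite-dimensional continuous unitary representation of G that is irreducible, i.e. the only subspaces W ⊆ V with ρ(g)W ⊆ W for all g ∈ G are {0} and V. Then for every unit vector u ∈ V and every w ∈ V one has (dim_ℂ V) · (C_{u,u} ⋆ C_{u,w}) = C_{u,w} as functions on G, where C_{v,w}(g) = ⟨v, ρ(g)w⟩ denotes the matrix coefficient and (φ ⋆ ψ)(g) = ∫_G φ(h) ψ(h⁻¹ g) dμ(h) the convolution with respect to the normalized Haar measure. -/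
open MeasureTheory
open scoped InnerProductSpace

/-! Average the rank-one operator `P = ⟪u, ·⟫ • u` over the group: `T = ∫ ρ h * P * ρ h⁻¹ dμ`.
By left invariance of `μ`, `T` commutes with every `ρ g`, so by Schur's lemma `T = c • 1`.
Conjugation preserves the trace and `μ` is a probability measure, hence
`c · dim V = tr T = tr P = ‖u‖² = 1`. Finally `(C_{u,u} ⋆ C_{u,w})(g) = ⟪u, T (ρ g w)⟫`,
which is `c · C_{u,w}(g)`. -/

theorem Module.End.exists_eq_smul_of_irreducible {K V ι : Type*} [Field K] [IsAlgClosed K]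
    [AddCommGroup V] [Module K V] [FiniteDimensional K V] [Nontrivial V] (ρ : ι → Module.End K V)
    (hirred : ∀ W : Submodule K V, (∀ i, ∀ v ∈ W, ρ i v ∈ W) → W = ⊥ ∨ W = ⊤)
    {T : Module.End K V} (hT : ∀ i v, ρ i (T v) = T (ρ i v)) :
    ∃ c : K, ∀ v, T v = c • v := by
  obtain ⟨c, hc⟩ := T.exists_eigenvalue
  have hinv : ∀ i, ∀ v ∈ T.eigenspace c, ρ i v ∈ T.eigenspace c := by
    intro i v hv
    rw [Module.End.mem_eigenspace_iff] at hv ⊢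
    rw [← hT, hv, map_smul]
  have htop : T.eigenspace c = ⊤ := (hirred _ hinv).resolve_left hc
  exact ⟨c, fun v => Module.End.mem_eigenspace_iff.1 (htop ▸ Submodule.mem_top)⟩

noncomputable def conjAverage {G A : Type*} [Group G] [MeasurableSpace G] [NormedRing A]
    [NormedSpace ℝ A] (μ : Measure G) (ρ : G →* A) (a : A) : A :=
  ∫ g, ρ g * a * ρ g⁻¹ ∂μ

section Averaging

variable {G : Type*} [Group G] [TopologicalSpace G] [IsTopologicalGroup G] [CompactSpace G]
  [MeasurableSpace G] [BorelSpace G] {μ : Measure G} [IsFiniteMeasure μ]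

theorem integrable_conj {A : Type*} [NormedRing A] {ρ : G →* A} (hρ : Continuous ρ) (a : A) :
    Integrable (fun g => ρ g * a * ρ g⁻¹) μ :=
  ((hρ.mul continuous_const).mul (hρ.comp continuous_inv)).integrable_of_hasCompactSupport
    (.of_compactSpace _)

theorem commute_conjAverage {A : Type*} [NormedRing A] [NormedSpace ℝ A] [IsScalarTower ℝ A A]
    [SMulCommClass ℝ A A] [μ.IsMulLeftInvariant] {ρ : G →* A} (hρ : Continuous ρ) (a : A)
    (g : G) : Commute (ρ g) (conjAverage μ ρ a) := by
  have hconj : ∀ h, ρ g * (ρ h * a * ρ h⁻¹) = ρ (g * h) * a * ρ (g * h)⁻¹ * ρ g := by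
    intro h
    simp only [map_mul, mul_inv_rev, mul_assoc, ← map_mul ρ g⁻¹ g, inv_mul_cancel, map_one,
      mul_one]
  calc ρ g * conjAverage μ ρ a = ∫ h, ρ g * (ρ h * a * ρ h⁻¹) ∂μ :=
        (integral_const_mul_of_integrable (integrable_conj hρ a)).symm
    _ = ∫ h, ρ h * a * ρ h⁻¹ * ρ g ∂μ := by
        simp_rw [hconj]
        exact integral_mul_left_eq_self (fun h => ρ h * a * ρ h⁻¹ * ρ g) g
    _ = conjAverage μ ρ a * ρ g := integral_mul_const_of_integrable (integrable_conj hρ a)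

theorem trace_conjAverage [IsProbabilityMeasure μ] {V : Type*} [NormedAddCommGroup V]
    [NormedSpace ℂ V] [FiniteDimensional ℂ V] {ρ : G →* (V →L[ℂ] V)} (hρ : Continuous ρ)
    (a : V →L[ℂ] V) :
    LinearMap.trace ℂ V ((conjAverage μ ρ a : V →L[ℂ] V) : V →ₗ[ℂ] V) = LinearMap.trace ℂ V a := by
  let τ : (V →L[ℂ] V) →L[ℂ] ℂ :=
    LinearMap.toContinuousLinearMap (LinearMap.trace ℂ V ∘ₗ ContinuousLinearMap.coeLM ℂ)
  have hτ : ∀ h, τ (ρ h * a * ρ h⁻¹) = τ a := by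
    intro h
    change LinearMap.trace ℂ V (ρ h * a * ρ h⁻¹ : V →L[ℂ] V) = LinearMap.trace ℂ V a
    rw [ContinuousLinearMap.toLinearMap_mul, LinearMap.trace_mul_comm,
      ContinuousLinearMap.toLinearMap_mul, ← mul_assoc, ← ContinuousLinearMap.toLinearMap_mul,
      ← map_mul, inv_mul_cancel, map_one, ContinuousLinearMap.toLinearMap_one, one_mul]
  calc LinearMap.trace ℂ V ((conjAverage μ ρ a : V →L[ℂ] V) : V →ₗ[ℂ] V) = τ (conjAverage μ ρ a) :=
        rfl
    _ = ∫ h, τ (ρ h * a * ρ h⁻¹) ∂μ := (τ.integral_comp_comm (integrable_conj hρ a)).symm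
    _ = LinearMap.trace ℂ V a := by simp [hτ, τ]

open InnerProductSpace in
theorem inner_conjAverage_rankOne_apply {V : Type*} [NormedAddCommGroup V]
    [InnerProductSpace ℂ V] [CompleteSpace V] {ρ : G →* (V →L[ℂ] V)} (hρ : Continuous ρ)
    (x u v w : V) (g : G) :
    ⟪x, (conjAverage μ ρ (rankOne ℂ u v) : V →L[ℂ] V) (ρ g w)⟫_ℂ
      = ∫ h, ⟪x, ρ h u⟫_ℂ * ⟪v, ρ (h⁻¹ * g) w⟫_ℂ ∂μ := by
  have hint := integrable_conj (μ := μ) hρ (rankOne ℂ u v)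
  rw [conjAverage, ContinuousLinearMap.integral_apply hint,
    ← integral_inner (hint.apply_continuousLinearMap _)]
  congr 1 with h
  simp [inner_smul_right, mul_comm]

end Averaging

open InnerProductSpace in
theorem matrix_coefficient_convolution_idempotent_general
    {G : Type*} [Group G] [TopologicalSpace G] [IsTopologicalGroup G]
    [CompactSpace G] [MeasurableSpace G] [BorelSpace G]
    (μ : Measure G) [μ.IsHaarMeasure] [IsProbabilityMeasure μ]
    {V : Type*} [NormedAddCommGroup V] [InnerProductSpace ℂ V] [FiniteDimensional ℂ V]
    (ρ : G →* (V →L[ℂ] V))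
    (hρcont : ∀ v : V, Continuous fun g => (ρ g) v)
    (hirred : ∀ W : Submodule ℂ V, (∀ (g : G), ∀ v ∈ W, (ρ g) v ∈ W) → W = ⊥ ∨ W = ⊤)
    (u w : V) (hu : ‖u‖ = 1) :
    ∀ g : G,
      (Module.finrank ℂ V : ℂ) * (∫ h, ⟪u, (ρ h) u⟫_ℂ * ⟪u, (ρ (h⁻¹ * g)) w⟫_ℂ ∂μ)
        = ⟪u, (ρ g) w⟫_ℂ := by
  intro g
  have : Nontrivial V := ⟨u, 0, by rintro rfl; simp at hu⟩
  have hρ : Continuous ρ := continuous_clm_apply.2 hρcont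
  obtain ⟨c, hc⟩ := Module.End.exists_eq_smul_of_irreducible (fun g => (ρ g : V →ₗ[ℂ] V)) hirred
    (T := (conjAverage μ ρ (rankOne ℂ u u) : V →L[ℂ] V))
    fun g v => congr($((commute_conjAverage hρ (rankOne ℂ u u) g).eq) v)
  have hcd : (Module.finrank ℂ V : ℂ) * c = 1 := by
    have hT : ((conjAverage μ ρ (rankOne ℂ u u) : V →L[ℂ] V) : V →ₗ[ℂ] V) = c • LinearMap.id :=
      LinearMap.ext hc
    calc (Module.finrank ℂ V : ℂ) * c
        = LinearMap.trace ℂ V ((conjAverage μ ρ (rankOne ℂ u u) : V →L[ℂ] V) : V →ₗ[ℂ] V) := by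
          simp [hT, mul_comm]
      _ = LinearMap.trace ℂ V (rankOne ℂ u u) := trace_conjAverage hρ _
      _ = 1 := by simp [trace_rankOne, inner_self_eq_norm_sq_to_K, hu]
  rw [← inner_conjAverage_rankOne_apply hρ, ← ContinuousLinearMap.coe_coe, hc, inner_smul_right,
    ← mul_assoc, hcd, one_mul]

/-- If `(V, ρ)` is an irreducible finite-dimensional continuous unitary
representation of `G`, then for every unit vector `u` and every `w ∈ V`,
`(dim V) · (C_{u,u} ⋆ C_{u,w}) = C_{u,w}`, where `C_{v,w}(g) = ⟨v, ρ(g)w⟩` and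
`(φ ⋆ ψ)(g) = ∫ φ(h) ψ(h⁻¹ g) dμ(h)`. -/
theorem matrix_coefficient_convolution_idempotent
    {G : Type*} [Group G] [TopologicalSpace G] [IsTopologicalGroup G]
    [CompactSpace G] [T2Space G] [MeasurableSpace G] [BorelSpace G]
    (μ : Measure G) [μ.IsHaarMeasure] [IsProbabilityMeasure μ]
    {V : Type*} [NormedAddCommGroup V] [InnerProductSpace ℂ V] [FiniteDimensional ℂ V]
    (ρ : G →* (V →L[ℂ] V))
    (hρUnitary : ∀ (g : G) (x y : V), ⟪(ρ g) x, (ρ g) y⟫_ℂ = ⟪x, y⟫_ℂ)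
    (hρcont : ∀ v : V, Continuous fun g => (ρ g) v)
    (hirred : ∀ W : Submodule ℂ V, (∀ (g : G), ∀ v ∈ W, (ρ g) v ∈ W) → W = ⊥ ∨ W = ⊤)
    (u w : V) (hu : ‖u‖ = 1) :
    ∀ g : G,
      (Module.finrank ℂ V : ℂ) * (∫ h, ⟪u, (ρ h) u⟫_ℂ * ⟪u, (ρ (h⁻¹ * g)) w⟫_ℂ ∂μ)
        = ⟪u, (ρ g) w⟫_ℂ :=
  matrix_coefficient_convolution_idempotent_general μ ρ hρcont hirred u w hu
end

section
/- For all continuous functions s, s' : H × G → ℂ and every h₀ ∈ H, the following two iterated integrals are equal: ∫_H ∫_G ∫_H conj(s(k, g)) · s'(u⁻¹ k h₀, g u) dμ_H(u) dμ_G(g) dμ_H(k) = ∫_G (∫_H conj(s(k, g k⁻¹)) dμ_H(k)) · (∫_H s'(t, g h₀ t⁻¹) dμ_H(t)) dμ_G(g). (This is the isometry property of the map U(s)(g) = ∫_H s(h, g h⁻¹) dμ_H(h) between the two C*(H)-valued inner products appearing in the identification ℂ ⊗_{C*H} (L²(G) ⋊ H) ≅ J(G).) -/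
open MeasureTheory ComplexConjugate

/-!
Haar measure on a compact group is invariant under inversion and right translation: each of
these maps it to a left-invariant measure of the same total mass, hence to itself by uniqueness.
With `B g = ∫_H s'(t, g h₀ t⁻¹) dt`, inversion-invariance on `H` (substitute `t = u⁻¹ k h₀`) turns
the innermost integral into `conj (s (k, g)) * B (g k)`, right-invariance on `G` (`g ↦ g k⁻¹`)
moves `k` back into the first factor, and Fubini for continuous functions then splits the
remaining double integral into the product of the two integrals over `H`.
-/

namespace MeasureTheory.Measure

variable {G : Type*} [Group G] [TopologicalSpace G] [IsTopologicalGroup G] [CompactSpace G]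
  [MeasurableSpace G] [BorelSpace G]

lemma eq_of_isMulLeftInvariant_of_measure_univ_eq (ν μ : Measure G) [IsHaarMeasure μ]
    [IsMulLeftInvariant ν] [IsFiniteMeasureOnCompacts ν] (h : ν Set.univ = μ Set.univ) :
    ν = μ := by
  rw [isMulInvariant_eq_smul_of_compactSpace ν μ] at h ⊢
  have hc : (haarScalarFactor ν μ : ENNReal) * μ Set.univ = 1 * μ Set.univ := by
    simpa using h
  rw [ENNReal.mul_left_inj (NeZero.ne _) (measure_ne_top _ _), ENNReal.coe_eq_one] at hc
  rw [hc, one_smul]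

lemma isMulRightInvariant_of_compactSpace (μ : Measure G) [IsHaarMeasure μ] :
    IsMulRightInvariant μ :=
  ⟨fun g => eq_of_isMulLeftInvariant_of_measure_univ_eq _ μ <| by
    rw [map_apply (measurable_mul_const g) .univ, Set.preimage_univ]⟩

lemma isInvInvariant_of_compactSpace (μ : Measure G) [IsHaarMeasure μ] :
    IsInvInvariant μ :=
  have := isMulRightInvariant_of_compactSpace μ
  ⟨eq_of_isMulLeftInvariant_of_measure_univ_eq _ μ <| by simp⟩

end MeasureTheory.Measure

open MeasureTheory.Measure

lemma integral_inv_mul_eq_integral_mul_inv {K E : Type*} [Group K] [MeasurableSpace K]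
    [MeasurableMul K] [MeasurableInv K] [NormedAddCommGroup E] [NormedSpace ℝ E]
    (μ : Measure K) [IsMulLeftInvariant μ] [IsInvInvariant μ] (f : K → K → E) (a : K) :
    ∫ u, f (u⁻¹ * a) u ∂μ = ∫ t, f t (a * t⁻¹) ∂μ := by
  rw [← integral_div_left_eq_self _ μ a]
  simp [div_eq_mul_inv]

theorem iterated_integral_isometry_identity_general
    {G : Type*} [Group G] [TopologicalSpace G] [IsTopologicalGroup G]
    [CompactSpace G] [MeasurableSpace G] [BorelSpace G]
    (μG : Measure G) [μG.IsHaarMeasure]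
    (H : Subgroup G) (hH : IsClosed (H : Set G))
    (μH : Measure H) [μH.IsHaarMeasure]
    (s s' : H × G → ℂ) (hs : Continuous s) (hs' : Continuous s') (h₀ : H) :
    (∫ k : H, ∫ g : G, ∫ u : H,
        conj (s (k, g)) * s' (u⁻¹ * k * h₀, g * (u : G)) ∂μH ∂μG ∂μH)
      = ∫ g : G,
          (∫ k : H, conj (s (k, g * (k : G)⁻¹)) ∂μH)
            * (∫ t : H, s' (t, g * (h₀ : G) * (t : G)⁻¹) ∂μH) ∂μG := by
  have : CompactSpace H := isCompact_iff_compactSpace.mp hH.isCompact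
  have := isMulRightInvariant_of_compactSpace μG
  have := isInvInvariant_of_compactSpace μH
  set B : G → ℂ := fun g => ∫ t : H, s' (t, g * (h₀ : G) * (t : G)⁻¹) ∂μH
  have hB : Continuous B := continuousOn_univ.1 <|
    continuousOn_integral_of_compact_support isCompact_univ
      (hs'.comp (by fun_prop)).continuousOn (by simp)
  have integral_H (k : H) (g : G) :
      ∫ u : H, conj (s (k, g)) * s' (u⁻¹ * k * h₀, g * (u : G)) ∂μH
        = conj (s (k, g)) * B (g * k) := by
    simp_rw [integral_const_mul, mul_assoc _ k h₀]
    rw [integral_inv_mul_eq_integral_mul_inv μH (fun t u => s' (t, g * (u : G)))]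
    simp [B, mul_assoc]
  have translate_G (k : H) :
      ∫ g : G, conj (s (k, g)) * B (g * k) ∂μG
        = ∫ g : G, conj (s (k, g * (k : G)⁻¹)) * B g ∂μG := by
    rw [← integral_mul_right_eq_self _ (k : G)⁻¹]
    simp
  calc _ = ∫ k : H, ∫ g : G, conj (s (k, g * (k : G)⁻¹)) * B g ∂μG ∂μH := by
        simp only [integral_H, translate_G]
    _ = ∫ g : G, ∫ k : H, conj (s (k, g * (k : G)⁻¹)) * B g ∂μH ∂μG :=
        integral_integral_swap_of_hasCompactSupport
          (((hs.comp (by fun_prop)).star).mul (hB.comp continuous_snd))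
          (HasCompactSupport.of_compactSpace _)
    _ = _ := by simp only [integral_mul_const, B]

/-- For continuous `s s' : H × G → ℂ` and `h₀ ∈ H` (with `H` a closed
subgroup of the compact group `G`), the two iterated integrals agree:
`∫_H ∫_G ∫_H conj(s(k,g)) s'(u⁻¹ k h₀, g u) dμ_H(u) dμ_G(g) dμ_H(k)
  = ∫_G (∫_H conj(s(k, g k⁻¹)) dμ_H(k)) (∫_H s'(t, g h₀ t⁻¹) dμ_H(t)) dμ_G(g)`. -/
theorem iterated_integral_isometry_identity
    {G : Type*} [Group G] [TopologicalSpace G] [IsTopologicalGroup G]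
    [CompactSpace G] [T2Space G] [MeasurableSpace G] [BorelSpace G]
    (μG : Measure G) [μG.IsHaarMeasure] [IsProbabilityMeasure μG]
    (H : Subgroup G) (hH : IsClosed (H : Set G))
    (μH : Measure H) [μH.IsHaarMeasure] [IsProbabilityMeasure μH]
    (s s' : H × G → ℂ) (hs : Continuous s) (hs' : Continuous s') (h₀ : H) :
    (∫ k : H, ∫ g : G, ∫ u : H,
        conj (s (k, g)) * s' (u⁻¹ * k * h₀, g * (u : G)) ∂μH ∂μG ∂μH)
      = ∫ g : G,
          (∫ k : H, conj (s (k, g * (k : G)⁻¹)) ∂μH)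
            * (∫ t : H, s' (t, g * (h₀ : G) * (t : G)⁻¹) ∂μH) ∂μG :=
  iterated_integral_isometry_identity_general μG H hH μH s s' hs hs' h₀
end
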